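/- Consider matrices A_1, …, A_N ∈ ℝ^{d×d}, symmetric positive definite matrices P_1, …, P_N, and scalars λ_s ∈ (0,1) and μ > 0 such that (i) A_iᵀ P_i A_i ≼ λ_s P_i for every i ∈ {1,…,N}, and (ii) ξᵀP_jξ ≤ μ · ξᵀP_iξ for all ξ ∈ ℝ^d and all i, j ∈ {1,…,N}. Let σ : ℕ → {1,…,N} be any switching signal and let x be the corresponding solution of x(t+1) = A_{σ(t)} x(t) with x(0) = x₀. Then for every t ∈ ℕ, V_{P_{σ(t)}}(x(t)) ≤ μ^{N(t)} · λ_s^{t} · V_{P_{σ(0)}}(x₀), where N(t) is the number of times s ∈ {1, …, t} with σ(s) ≠ σ(s−1). -/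

import Mathlib

open Matrix Finset

/-! Along a run of the mode `i`, the inequality `Aᵢᵀ Pᵢ Aᵢ ≼ λ Pᵢ` makes `V_{Pᵢ}` contract by `λ` per
step; at each switch from `i` to `j` the change of Lyapunov function `V_{Pᵢ} ↦ V_{Pⱼ}` costs at
most a factor `μ`. Multiplying the one-step factors gives `μ^{N(t)} λᵗ`. -/

theorem Matrix.dotProduct_mulVec_mulVec_le_of_posSemidef {n : Type*} [Fintype n]
    {A P : Matrix n n ℝ} {lam : ℝ} (h : (lam • P - Aᵀ * P * A).PosSemidef) (v : n → ℝ) :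
    A *ᵥ v ⬝ᵥ P *ᵥ (A *ᵥ v) ≤ lam * (v ⬝ᵥ P *ᵥ v) := by
  have hv := h.dotProduct_mulVec_nonneg v
  have hconj : v ⬝ᵥ (Aᵀ * P * A) *ᵥ v = A *ᵥ v ⬝ᵥ P *ᵥ (A *ᵥ v) := by
    rw [← mulVec_mulVec, ← mulVec_mulVec, dotProduct_mulVec, vecMul_transpose]
  simp only [star_trivial, sub_mulVec, dotProduct_sub, smul_mulVec, dotProduct_smul,
    smul_eq_mul, hconj] at hv
  linarith

def switchCount {ι : Type*} [DecidableEq ι] (σ : ℕ → ι) (t : ℕ) : ℕ :=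
  #{s ∈ Icc 1 t | σ s ≠ σ (s - 1)}

theorem switchCount_succ {ι : Type*} [DecidableEq ι] (σ : ℕ → ι) (t : ℕ) :
    switchCount σ (t + 1) = switchCount σ t + if σ (t + 1) ≠ σ t then 1 else 0 := by
  rw [switchCount, switchCount, ← insert_Icc_right_eq_Icc_add_one (by omega), filter_insert,
    Nat.add_sub_cancel]
  split_ifs with h
  · exact card_insert_of_notMem (by simp)
  · rfl

theorem dotProduct_mulVec_mulVec_le_pow_switch {ι n : Type*} [DecidableEq ι] [Fintype n]
    {A P : ι → Matrix n n ℝ} {lam mu : ℝ} (hmu0 : 0 ≤ mu)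
    (hLyap : ∀ i, (lam • P i - (A i)ᵀ * P i * A i).PosSemidef)
    (hmu : ∀ i j (ξ : n → ℝ), ξ ⬝ᵥ P j *ᵥ ξ ≤ mu * (ξ ⬝ᵥ P i *ᵥ ξ)) (i j : ι) (v : n → ℝ) :
    A i *ᵥ v ⬝ᵥ P j *ᵥ (A i *ᵥ v) ≤
      mu ^ (if j ≠ i then 1 else 0) * (lam * (v ⬝ᵥ P i *ᵥ v)) := by
  have hdecay := dotProduct_mulVec_mulVec_le_of_posSemidef (hLyap i) v
  split_ifs with h
  · rw [pow_one]
    exact (hmu i j _).trans (mul_le_mul_of_nonneg_left hdecay hmu0)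
  · rw [not_ne_iff.mp h, pow_zero, one_mul]
    exact hdecay

theorem switched_lyapunov_estimate_general
    {d N : ℕ}
    (A P : Fin N → Matrix (Fin d) (Fin d) ℝ)
    (lam mu : ℝ) (hlam0 : 0 < lam) (hmu0 : 0 < mu)
    (hLyap : ∀ i, (lam • P i - (A i)ᵀ * P i * A i).PosSemidef)
    (hmu : ∀ (i j : Fin N) (ξ : Fin d → ℝ),
      ξ ⬝ᵥ (P j).mulVec ξ ≤ mu * (ξ ⬝ᵥ (P i).mulVec ξ))
    (σ : ℕ → Fin N) (x₀ : Fin d → ℝ) (x : ℕ → Fin d → ℝ)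
    (hx0 : x 0 = x₀) (hx : ∀ t : ℕ, x (t + 1) = (A (σ t)).mulVec (x t)) :
    ∀ t : ℕ,
      (x t) ⬝ᵥ (P (σ t)).mulVec (x t) ≤
        mu ^ (((Finset.Icc 1 t).filter fun s => σ s ≠ σ (s - 1)).card) *
          lam ^ t * (x₀ ⬝ᵥ (P (σ 0)).mulVec x₀) := by
  intro t
  change _ ≤ mu ^ switchCount σ t * _ * _
  induction t with
  | zero => simp [hx0, switchCount]
  | succ t ih =>
    calc x (t + 1) ⬝ᵥ P (σ (t + 1)) *ᵥ x (t + 1)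
        ≤ mu ^ (if σ (t + 1) ≠ σ t then 1 else 0) * (lam * (x t ⬝ᵥ P (σ t) *ᵥ x t)) := by
          rw [hx t]
          exact dotProduct_mulVec_mulVec_le_pow_switch hmu0.le hLyap hmu _ _ _
      _ ≤ mu ^ (if σ (t + 1) ≠ σ t then 1 else 0) *
            (lam * (mu ^ switchCount σ t * lam ^ t * (x₀ ⬝ᵥ P (σ 0) *ᵥ x₀))) := by
          gcongr
      _ = mu ^ switchCount σ (t + 1) * lam ^ (t + 1) * (x₀ ⬝ᵥ P (σ 0) *ᵥ x₀) := by
          rw [switchCount_succ]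
          ring

/-- Given subsystems `A_1, …, A_N` with symmetric positive definite
matrices `P_1, …, P_N`, `λ_s ∈ (0,1)` and `μ > 0` with `A_iᵀP_iA_i ≼ λ_s P_i` and
`ξᵀP_jξ ≤ μ ξᵀP_iξ` for all `i, j, ξ`, any solution of the switched system
`x(t+1) = A_{σ(t)} x(t)` satisfies
`V_{P_{σ(t)}}(x(t)) ≤ μ^{N(t)} λ_sᵗ V_{P_{σ(0)}}(x₀)`, where `N(t)` counts the times
`s ∈ {1, …, t}` with `σ(s) ≠ σ(s−1)`. -/
theorem switched_lyapunov_estimate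
    {d N : ℕ} (hd : 0 < d)
    (A P : Fin N → Matrix (Fin d) (Fin d) ℝ)
    (hP : ∀ i, (P i).PosDef)
    (lam mu : ℝ) (hlam0 : 0 < lam) (hlam1 : lam < 1) (hmu0 : 0 < mu)
    (hLyap : ∀ i, (lam • P i - (A i)ᵀ * P i * A i).PosSemidef)
    (hmu : ∀ (i j : Fin N) (ξ : Fin d → ℝ),
      ξ ⬝ᵥ (P j).mulVec ξ ≤ mu * (ξ ⬝ᵥ (P i).mulVec ξ))
    (σ : ℕ → Fin N) (x₀ : Fin d → ℝ) (x : ℕ → Fin d → ℝ)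
    (hx0 : x 0 = x₀) (hx : ∀ t : ℕ, x (t + 1) = (A (σ t)).mulVec (x t)) :
    ∀ t : ℕ,
      (x t) ⬝ᵥ (P (σ t)).mulVec (x t) ≤
        mu ^ (((Finset.Icc 1 t).filter fun s => σ s ≠ σ (s - 1)).card) *
          lam ^ t * (x₀ ⬝ᵥ (P (σ 0)).mulVec x₀) :=
  switched_lyapunov_estimate_general A P lam mu hlam0 hmu0 hLyap hmu σ x₀ x hx0 hx
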